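/- arXiv:math/0204118 — 7 statements merged into one kernel-verified Lean document; each statement's English description precedes it below -/
import Mathlib

section
/- Let G be a topological group acting continuously on a topological space X, and suppose the action satisfies property (a): for every x ∈ X and every open neighborhood O of the identity in G, there exists y ∈ X with x ∈ interior(closure(O·y)). Then for every x ∈ X, either interior(closure(G·x)) = closure(G·x) or interior(closure(G·x)) = ∅. -/
/-!
The set `U = interior (closure (G • x))` is open and `G`-invariant, so as soon as it meets the
closure of an orbit it contains that whole orbit. If `U` is nonempty it therefore contains `G • x`.
A point `w` of `closure (G • x)` lies in `interior (closure (G • y))` for some `y`; this open set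
meets `G • x ⊆ U`, so `U` contains `G • y`, hence `closure (G • y) ⊆ closure (G • x)` and `w ∈ U`.
-/

open MulAction Pointwise

section OrbitClosure

variable {G X : Type*} [Group G] [MulAction G X] [TopologicalSpace X]

theorem orbit_subset_of_isOpen_of_smul_subset {s : Set X} (hs : IsOpen s)
    (hinv : ∀ g : G, g • s ⊆ s) {y : X} (hy : (closure (orbit G y) ∩ s).Nonempty) :
    orbit G y ⊆ s := by
  obtain ⟨_, ⟨g, rfl⟩, hgy⟩ := (closure_inter_open_nonempty_iff hs).mp hy
  rintro _ ⟨k, rfl⟩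
  change k • y ∈ s
  have hk : k • y = (k * g⁻¹) • (g • y) := by rw [smul_smul, inv_mul_cancel_right]
  rw [hk]
  exact hinv _ (Set.smul_mem_smul_set hgy)

variable [ContinuousConstSMul G X]

theorem smul_interior_closure_orbit (g : G) (x : X) :
    g • interior (closure (orbit G x)) = interior (closure (orbit G x)) := by
  rw [← interior_smul, ← closure_smul, smul_orbit]

theorem orbit_subset_interior_closure_orbit {x y z : X}
    (hzx : z ∈ interior (closure (orbit G x))) (hzy : z ∈ closure (orbit G y)) :
    orbit G y ⊆ interior (closure (orbit G x)) :=
  orbit_subset_of_isOpen_of_smul_subset isOpen_interior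
    (fun g => (smul_interior_closure_orbit g x).le) ⟨z, hzy, hzx⟩

end OrbitClosure

theorem stmt2_general {G X : Type*} [Group G] [TopologicalSpace G]
    [TopologicalSpace X] [MulAction G X] [ContinuousSMul G X]
    (ha : ∀ (x : X) (O : Set G), IsOpen O → (1 : G) ∈ O →
      ∃ y : X, x ∈ interior (closure ((fun g => g • y) '' O)))
    (x : X) :
    interior (closure (MulAction.orbit G x)) = closure (MulAction.orbit G x) ∨
    interior (closure (MulAction.orbit G x)) = ∅ := by
  rcases (interior (closure (orbit G x))).eq_empty_or_nonempty with hempty | ⟨u, hu⟩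
  · exact Or.inr hempty
  refine Or.inl (interior_subset.antisymm fun w hw => ?_)
  have hGx := orbit_subset_interior_closure_orbit hu (interior_subset hu)
  obtain ⟨y, hy⟩ := ha w Set.univ isOpen_univ (Set.mem_univ 1)
  rw [Set.image_univ] at hy
  obtain ⟨z, hzy, hzx⟩ := mem_closure_iff.mp hw _ isOpen_interior hy
  have hGy := orbit_subset_interior_closure_orbit (hGx hzx) (interior_subset hzy)
  exact interior_mono (closure_minimal (hGy.trans interior_subset) isClosed_closure) hy

theorem stmt2 {G X : Type*} [Group G] [TopologicalSpace G] [IsTopologicalGroup G]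
    [TopologicalSpace X] [MulAction G X] [ContinuousSMul G X]
    (ha : ∀ (x : X) (O : Set G), IsOpen O → (1 : G) ∈ O →
      ∃ y : X, x ∈ interior (closure ((fun g => g • y) '' O)))
    (x : X) :
    interior (closure (MulAction.orbit G x)) = closure (MulAction.orbit G x) ∨
    interior (closure (MulAction.orbit G x)) = ∅ :=
  stmt2_general ha x
end

section
/- Let G be a topological group acting continuously on a topological space X. If the action satisfies property (b): for every x ∈ X and every open neighborhood O of the identity in G, x ∈ interior(closure(O·x)), then for every x ∈ X, closure(G·x) is a clopen subset of X. -/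
/-! An orbit closure is closed and invariant, so it contains the orbit of each of its points `y`,
hence also the closure of that orbit. Property (b) with `O = G` puts `y` in the interior of its own
orbit closure, so every point of the orbit closure of `x` is an interior point of it. -/

open MulAction

section

variable {M α : Type*} [Monoid M] [MulAction M α] [TopologicalSpace α] [ContinuousConstSMul M α]

theorem orbit_subset_closure_orbit_of_mem_closure {x y : α} (hy : y ∈ closure (orbit M x)) :
    orbit M y ⊆ closure (orbit M x) := by
  rintro _ ⟨c, rfl⟩
  exact smul_closure_orbit_subset c x (Set.smul_mem_smul_set hy)

theorem isOpen_closure_orbit_of_forall_mem_interior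
    (h : ∀ y : α, y ∈ interior (closure (orbit M y))) (x : α) :
    IsOpen (closure (orbit M x)) := by
  rw [← subset_interior_iff_isOpen]
  intro y hy
  exact interior_mono (closure_minimal (orbit_subset_closure_orbit_of_mem_closure hy)
    isClosed_closure) (h y)

end

theorem stmt5_general {G X : Type*} [Group G] [TopologicalSpace G]
    [TopologicalSpace X] [MulAction G X] [ContinuousSMul G X]
    (hb : ∀ (x : X) (O : Set G), IsOpen O → (1 : G) ∈ O →
      x ∈ interior (closure ((fun g => g • x) '' O)))
    (x : X) :
    IsClopen (closure (MulAction.orbit G x)) := by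
  have h_interior (y : X) : y ∈ interior (closure (orbit G y)) := by
    have := hb y Set.univ isOpen_univ (Set.mem_univ 1)
    rwa [Set.image_univ] at this
  exact ⟨isClosed_closure, isOpen_closure_orbit_of_forall_mem_interior h_interior x⟩

theorem stmt5 {G X : Type*} [Group G] [TopologicalSpace G] [IsTopologicalGroup G]
    [TopologicalSpace X] [MulAction G X] [ContinuousSMul G X]
    (hb : ∀ (x : X) (O : Set G), IsOpen O → (1 : G) ∈ O →
      x ∈ interior (closure ((fun g => g • x) '' O)))
    (x : X) :
    IsClopen (closure (MulAction.orbit G x)) :=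
  stmt5_general hb x
end

section
/- Let G be a topological group acting continuously on a topological space X satisfying property (a): for every x ∈ X and every open neighborhood O of the identity, there exists y ∈ X such that x ∈ interior(closure(O·y)). Let O be a symmetric open neighborhood of the identity with O·O·O ⊆ V for some open neighborhood V of the identity. Then for every x ∈ X there exists z ∈ X such that the star of x in the cover {closure(O·w) : w ∈ X} is contained in closure(V·z); i.e., whenever x ∈ closure(O·y), we have closure(O·y) ⊆ closure(V·z). -/
/-!
Choose `z` with `x ∈ interior (closure (O • z))`. If `x ∈ closure (O • y)`, that interior meets
`O • y`, say at `g • y` with `g ∈ O`. Every `h • y` with `h ∈ O` is then the translate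
`(h * g⁻¹) • (g • y)` of a point of `closure (O • z)`, so it lies in `closure ((O * O⁻¹ * O) • z)`,
and `O * O⁻¹ * O = O * O * O ⊆ V` by symmetry.
-/

open Pointwise

section OrbitClosure

variable {G X : Type*} [Group G] [MulAction G X] [TopologicalSpace X] [ContinuousConstSMul G X]

theorem smul_mem_closure_image_smul {S T : Set G} {z p : X} {a : G}
    (hp : p ∈ closure ((fun g => g • z) '' S)) (hST : a • S ⊆ T) :
    a • p ∈ closure ((fun g => g • z) '' T) := by
  refine map_mem_closure (continuous_const_smul a) hp ?_
  rintro _ ⟨g, hg, rfl⟩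
  exact ⟨a * g, hST (Set.smul_mem_smul_set hg), mul_smul a g z⟩

theorem closure_image_smul_subset_of_smul_mem {O V : Set G} (hOV : O * O⁻¹ * O ⊆ V)
    {y z : X} {g : G} (hg : g ∈ O) (hgy : g • y ∈ closure ((fun g => g • z) '' O)) :
    closure ((fun g => g • y) '' O) ⊆ closure ((fun g => g • z) '' V) := by
  refine closure_minimal ?_ isClosed_closure
  rintro _ ⟨h, hh, rfl⟩
  have htranslate : h • y = (h * g⁻¹) • g • y := by rw [smul_smul, inv_mul_cancel_right]
  show h • y ∈ _
  rw [htranslate]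
  refine smul_mem_closure_image_smul hgy ?_
  rintro _ ⟨k, hk, rfl⟩
  exact hOV (Set.mul_mem_mul (Set.mul_mem_mul hh (Set.inv_mem_inv.mpr hg)) hk)

end OrbitClosure

theorem stmt9_general {G X : Type*} [Group G] [TopologicalSpace G]
    [TopologicalSpace X] [MulAction G X] [ContinuousSMul G X]
    (ha : ∀ (x : X) (O : Set G), IsOpen O → (1 : G) ∈ O →
      ∃ y : X, x ∈ interior (closure ((fun g => g • y) '' O)))
    (O V : Set G) (hO : IsOpen O) (hOe : (1 : G) ∈ O) (hOsym : O⁻¹ = O)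
    (hOOO : O * O * O ⊆ V)
    (x : X) :
    ∃ z : X, ∀ y : X, x ∈ closure ((fun g => g • y) '' O) →
      closure ((fun g => g • y) '' O) ⊆ closure ((fun g => g • z) '' V) := by
  obtain ⟨z, hz⟩ := ha x O hO hOe
  refine ⟨z, fun y hxy => ?_⟩
  obtain ⟨_, hgz, g, hg, rfl⟩ := mem_closure_iff.mp hxy _ isOpen_interior hz
  exact closure_image_smul_subset_of_smul_mem (by rwa [hOsym]) hg (interior_subset hgz)

theorem stmt9 {G X : Type*} [Group G] [TopologicalSpace G] [IsTopologicalGroup G]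
    [TopologicalSpace X] [MulAction G X] [ContinuousSMul G X]
    (ha : ∀ (x : X) (O : Set G), IsOpen O → (1 : G) ∈ O →
      ∃ y : X, x ∈ interior (closure ((fun g => g • y) '' O)))
    (O V : Set G) (hO : IsOpen O) (hOe : (1 : G) ∈ O) (hOsym : O⁻¹ = O)
    (hV : IsOpen V) (hVe : (1 : G) ∈ V) (hOOO : O * O * O ⊆ V)
    (x : X) :
    ∃ z : X, ∀ y : X, x ∈ closure ((fun g => g • y) '' O) →
      closure ((fun g => g • y) '' O) ⊆ closure ((fun g => g • z) '' V) :=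
  stmt9_general ha O V hO hOe hOsym hOOO x
end

section
/- Let G be a topological group acting continuously on a topological space X satisfying property (a): for every x ∈ X and every open neighborhood O of the identity in G there exists y ∈ X with x ∈ interior(closure(O·y)). Let O be a symmetric open neighborhood of the identity in G. If x ∈ interior(closure(O·z)) and x ∈ closure(O·y), then y ∈ closure((O*O)·z) and O·y ⊆ closure((O*O*O)·z). -/
/-! Some `g ∈ O` moves `y` into the interior of `closure (O • z)`, because `x` lies both in that
open set and in `closure (O • y)`. Translating back by `g⁻¹ ∈ O` puts `y` in `closure ((O * O) • z)`,
and translating that by any `h ∈ O` puts `h • y` in `closure ((O * O * O) • z)`. -/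

open Pointwise

section

variable {G X : Type*} [Group G] [TopologicalSpace X] [MulAction G X] [ContinuousConstSMul G X]

theorem smul_mem_closure_image_mul {S T : Set G} {a : G} {z w : X} (ha : a ∈ S)
    (hw : w ∈ closure ((fun g => g • z) '' T)) :
    a • w ∈ closure ((fun g => g • z) '' (S * T)) := by
  have hmaps : a • (fun g => g • z) '' T ⊆ (fun g => g • z) '' (S * T) := by
    rintro _ ⟨_, ⟨t, ht, rfl⟩, rfl⟩
    exact ⟨a * t, Set.mul_mem_mul ha ht, mul_smul a t z⟩
  have hw' : a • w ∈ closure (a • (fun g => g • z) '' T) := by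
    rw [closure_smul]
    exact Set.smul_mem_smul_set hw
  exact closure_mono hmaps hw'

theorem mem_closure_image_inv_mul_of_mem_interior_closure {U V : Set G} {x y z : X}
    (hxz : x ∈ interior (closure ((fun g => g • z) '' V)))
    (hxy : x ∈ closure ((fun g => g • y) '' U)) :
    y ∈ closure ((fun g => g • z) '' (U⁻¹ * V)) := by
  obtain ⟨_, hgy, g, hg, rfl⟩ := mem_closure_iff.mp hxy _ isOpen_interior hxz
  simpa using smul_mem_closure_image_mul (Set.inv_mem_inv.mpr hg) (interior_subset hgy)

end

theorem stmt10_general {G X : Type*} [Group G] [TopologicalSpace G]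
    [TopologicalSpace X] [MulAction G X] [ContinuousSMul G X]
    (O : Set G) (hOsym : O⁻¹ = O)
    (x y z : X)
    (hxz : x ∈ interior (closure ((fun g => g • z) '' O)))
    (hxy : x ∈ closure ((fun g => g • y) '' O)) :
    y ∈ closure ((fun g => g • z) '' (O * O)) ∧
    (fun g => g • y) '' O ⊆ closure ((fun g => g • z) '' (O * O * O)) := by
  have hy : y ∈ closure ((fun g => g • z) '' (O * O)) := by
    simpa only [hOsym] using mem_closure_image_inv_mul_of_mem_interior_closure hxz hxy
  refine ⟨hy, ?_⟩
  rintro _ ⟨h, hh, rfl⟩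
  rw [mul_assoc]
  exact smul_mem_closure_image_mul hh hy

theorem stmt10 {G X : Type*} [Group G] [TopologicalSpace G] [IsTopologicalGroup G]
    [TopologicalSpace X] [MulAction G X] [ContinuousSMul G X]
    (ha : ∀ (x : X) (O : Set G), IsOpen O → (1 : G) ∈ O →
      ∃ y : X, x ∈ interior (closure ((fun g => g • y) '' O)))
    (O : Set G) (hO : IsOpen O) (hOe : (1 : G) ∈ O) (hOsym : O⁻¹ = O)
    (x y z : X)
    (hxz : x ∈ interior (closure ((fun g => g • z) '' O)))
    (hxy : x ∈ closure ((fun g => g • y) '' O)) :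
    y ∈ closure ((fun g => g • z) '' (O * O)) ∧
    (fun g => g • y) '' O ⊆ closure ((fun g => g • z) '' (O * O * O)) :=
  stmt10_general O hOsym x y z hxz hxy
end

section
/- Let G be a topological group acting continuously on a topological space X. Suppose W ⊆ X is open, x ∈ W, O is a symmetric open neighborhood of the identity of G, and V is an open neighborhood of x such that closure((O*O)·V) ⊆ W. Then the star of x in the cover {closure(O·y) : y ∈ X} is contained in W; that is, for any y ∈ X, if x ∈ closure(O·y) then closure(O·y) ⊆ W. -/
open Pointwise

theorem Set.image_smul_subset_mul_inv_smul {G X : Type*} [Group G] [MulAction G X]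
    {O : Set G} {V : Set X} {y : X} {g : G} (hg : g ∈ O) (hgy : g • y ∈ V) :
    (fun h => h • y) '' O ⊆ (O * O⁻¹) • V := by
  rintro _ ⟨h, hh, rfl⟩
  exact ⟨h * g⁻¹, Set.mul_mem_mul hh (Set.inv_mem_inv.mpr hg), g • y, hgy, by simp [mul_smul]⟩

theorem stmt11_general {G X : Type*} [Group G]
    [TopologicalSpace X] [MulAction G X]
    (W : Set X) (x : X)
    (O : Set G) (hOsym : O⁻¹ = O)
    (V : Set X) (hV : IsOpen V) (hxV : x ∈ V)
    (hOOV : closure ((O * O) • V) ⊆ W) :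
    ∀ y : X, x ∈ closure ((fun g => g • y) '' O) →
      closure ((fun g => g • y) '' O) ⊆ W := by
  intro y hx
  obtain ⟨_, hgyV, g, hg, rfl⟩ := mem_closure_iff.mp hx V hV hxV
  have hsub := Set.image_smul_subset_mul_inv_smul hg hgyV
  rw [hOsym] at hsub
  exact (closure_mono hsub).trans hOOV

theorem stmt11 {G X : Type*} [Group G] [TopologicalSpace G] [IsTopologicalGroup G]
    [TopologicalSpace X] [MulAction G X] [ContinuousSMul G X]
    (W : Set X) (hW : IsOpen W) (x : X) (hxW : x ∈ W)
    (O : Set G) (hO : IsOpen O) (hOe : (1 : G) ∈ O) (hOsym : O⁻¹ = O)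
    (V : Set X) (hV : IsOpen V) (hxV : x ∈ V)
    (hOOV : closure ((O * O) • V) ⊆ W) :
    ∀ y : X, x ∈ closure ((fun g => g • y) '' O) →
      closure ((fun g => g • y) '' O) ⊆ W :=
  stmt11_general W x O hOsym V hV hxV hOOV
end

section
/- Let G be a topological group acting continuously on a connected topological space X satisfying property (a): for every x ∈ X and every open neighborhood O of the identity, there exists y ∈ X with x ∈ interior(closure(O·y)). Then for every x ∈ X with interior(closure(G·x)) ≠ ∅, the orbit G·x is dense in X, i.e. closure(G·x) = X. -/
/-!
Let `C = closure (G • x)` and `U = interior C`. The set `U` is open and, we claim, closed; since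
it is nonempty and `X` is connected, `U = X`. If `z` lies in the closure of `U`, property (a)
with `O = G` gives an orbit `G • y` whose closure has `z` in its interior. That interior is an
open neighbourhood of `z`, so it meets the open set `U`, and hence `G • y` itself meets `U ⊆ C`.
As `C` is invariant, `G • y ⊆ C`, so `z ∈ interior (closure (G • y)) ⊆ U`.
-/

open Set MulAction

section Monoid

variable {M α : Type*} [Monoid M] [TopologicalSpace α] [MulAction M α] [ContinuousConstSMul M α]

theorem closure_orbit_subset_of_mem_closure_orbit {x y : α} (h : y ∈ closure (orbit M x)) :
    closure (orbit M y) ⊆ closure (orbit M x) := by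
  refine closure_minimal ?_ isClosed_closure
  rintro _ ⟨c, rfl⟩
  exact smul_closure_orbit_subset c x (smul_mem_smul_set h)

end Monoid

section Group

variable {G α : Type*} [Group G] [TopologicalSpace α] [MulAction G α] [ContinuousConstSMul G α]

theorem closure_orbit_subset_of_closure_inter_orbit_nonempty {x y : α}
    (h : (closure (orbit G x) ∩ orbit G y).Nonempty) :
    closure (orbit G y) ⊆ closure (orbit G x) := by
  obtain ⟨_, hg, g, rfl⟩ := h
  simpa only [orbit_smul] using closure_orbit_subset_of_mem_closure_orbit hg

theorem isClosed_interior_closure_orbit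
    (h : ∀ z : α, ∃ y : α, z ∈ interior (closure (orbit G y))) (x : α) :
    IsClosed (interior (closure (orbit G x))) := by
  refine closure_subset_iff_isClosed.mp fun z hz => ?_
  obtain ⟨y, hy⟩ := h z
  obtain ⟨w, hwy, hwx⟩ := mem_closure_iff.mp hz _ isOpen_interior hy
  have hmeet : (interior (closure (orbit G x)) ∩ orbit G y).Nonempty :=
    mem_closure_iff.mp (interior_subset hwy) _ isOpen_interior hwx
  have hsub := closure_orbit_subset_of_closure_inter_orbit_nonempty
    (hmeet.mono (inter_subset_inter_left _ interior_subset))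
  exact interior_mono hsub hy

end Group

theorem stmt14_general {G X : Type*} [Group G] [TopologicalSpace G]
    [TopologicalSpace X] [ConnectedSpace X] [MulAction G X] [ContinuousSMul G X]
    (ha : ∀ (x : X) (O : Set G), IsOpen O → (1 : G) ∈ O →
      ∃ y : X, x ∈ interior (closure ((fun g => g • y) '' O)))
    (x : X) (hne : interior (closure (MulAction.orbit G x)) ≠ ∅) :
    closure (MulAction.orbit G x) = Set.univ := by
  have hcover : ∀ z : X, ∃ y : X, z ∈ interior (closure (orbit G y)) := fun z => by
    obtain ⟨y, hy⟩ := ha z univ isOpen_univ trivial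
    rw [image_univ] at hy
    exact ⟨y, hy⟩
  have hclopen : IsClopen (interior (closure (orbit G x))) :=
    ⟨isClosed_interior_closure_orbit hcover x, isOpen_interior⟩
  exact interior_eq_univ.mp (hclopen.eq_univ (nonempty_iff_ne_empty.mpr hne))

theorem stmt14 {G X : Type*} [Group G] [TopologicalSpace G] [IsTopologicalGroup G]
    [TopologicalSpace X] [ConnectedSpace X] [MulAction G X] [ContinuousSMul G X]
    (ha : ∀ (x : X) (O : Set G), IsOpen O → (1 : G) ∈ O →
      ∃ y : X, x ∈ interior (closure ((fun g => g • y) '' O)))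
    (x : X) (hne : interior (closure (MulAction.orbit G x)) ≠ ∅) :
    closure (MulAction.orbit G x) = Set.univ :=
  stmt14_general ha x hne
end

section
/- Let G be a topological group acting continuously on a topological space X. If the action satisfies property (b): for every x ∈ X and open neighborhood O of the identity, x ∈ interior(closure(O·x)), then for every x ∈ X and every y ∈ closure(G·x), we have closure(G·y) = closure(G·x). -/
open Pointwise

section Monoid

variable {M X : Type*} [Monoid M] [TopologicalSpace X] [MulAction M X] [ContinuousConstSMul M X]

theorem MulAction.orbit_subset_closure_orbit_of_mem {z w : X}
    (hz : z ∈ closure (MulAction.orbit M w)) :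
    MulAction.orbit M z ⊆ closure (MulAction.orbit M w) := by
  rintro _ ⟨m, rfl⟩
  exact smul_closure_orbit_subset m w (Set.smul_mem_smul_set hz)

theorem MulAction.closure_orbit_subset_of_mem {z w : X}
    (hz : z ∈ closure (MulAction.orbit M w)) :
    closure (MulAction.orbit M z) ⊆ closure (MulAction.orbit M w) :=
  closure_minimal (orbit_subset_closure_orbit_of_mem hz) isClosed_closure

end Monoid

/-- The orbit of `x` meets the open set `interior (closure (orbit G y))` near `y`, say at `g • x`,
and `x = g⁻¹ • (g • x)` lies in the closed invariant set `closure (orbit G y)`. -/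
theorem MulAction.mem_closure_orbit_of_mem_interior_closure_orbit {G X : Type*} [Group G]
    [TopologicalSpace X] [MulAction G X] [ContinuousConstSMul G X] {x y : X}
    (hy : y ∈ closure (MulAction.orbit G x))
    (hy_int : y ∈ interior (closure (MulAction.orbit G y))) :
    x ∈ closure (MulAction.orbit G y) := by
  obtain ⟨_, hgx_int, g, rfl⟩ := mem_closure_iff.mp hy _ isOpen_interior hy_int
  have hgx : g • x ∈ closure (MulAction.orbit G y) := interior_subset hgx_int
  exact orbit_subset_closure_orbit_of_mem hgx ⟨g⁻¹, inv_smul_smul g x⟩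

theorem stmt18_general {G X : Type*} [Group G] [TopologicalSpace G]
    [TopologicalSpace X] [MulAction G X] [ContinuousSMul G X]
    (hb : ∀ (x : X) (O : Set G), IsOpen O → (1 : G) ∈ O →
      x ∈ interior (closure ((fun g => g • x) '' O)))
    (x y : X) (hy : y ∈ closure (MulAction.orbit G x)) :
    closure (MulAction.orbit G y) = closure (MulAction.orbit G x) := by
  have hy_int : y ∈ interior (closure (MulAction.orbit G y)) := by
    have h := hb y Set.univ isOpen_univ (Set.mem_univ 1)
    rwa [Set.image_univ] at h
  have hx : x ∈ closure (MulAction.orbit G y) :=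
    MulAction.mem_closure_orbit_of_mem_interior_closure_orbit hy hy_int
  exact (MulAction.closure_orbit_subset_of_mem hy).antisymm
    (MulAction.closure_orbit_subset_of_mem hx)

theorem stmt18 {G X : Type*} [Group G] [TopologicalSpace G] [IsTopologicalGroup G]
    [TopologicalSpace X] [MulAction G X] [ContinuousSMul G X]
    (hb : ∀ (x : X) (O : Set G), IsOpen O → (1 : G) ∈ O →
      x ∈ interior (closure ((fun g => g • x) '' O)))
    (x y : X) (hy : y ∈ closure (MulAction.orbit G x)) :
    closure (MulAction.orbit G y) = closure (MulAction.orbit G x) :=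
  stmt18_general hb x y hy
end
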